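/- arXiv:0809.4343 — 2 statements merged into one kernel-verified Lean document; each statement's English description precedes it below -/
import Mathlib

section
/- Let A, B, C be locally ordered 2-categories, V: A → B, W: B → C 2-functors with W a local equivalence (an equivalence on each hom-poset), and U = W ∘ V with a left 2-adjoint F ⊣ U with unit η. Then F ∘ W is left 2-adjoint to V, and the unit ξ of this adjunction satisfies W(ξ_B) = η_{WB} for every object B of B. -/
/-!
Local surjectivity of `W` lets us choose `ξ_B : B ⟶ V F W B` with `W ξ_B = η_{WB}`, and the counit
of `F ⊣ W ∘ V` serves unchanged as the counit of `F ∘ W ⊣ V`. Since `W` is locally injective, each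
adjunction identity in `ℬ` holds as soon as its image under `W` does, and that image is the
corresponding identity of `F ⊣ W ∘ V`.
-/

universe u v u' v' u₁ v₁ u₂ v₂ u₃ v₃

/-- A locally ordered 2-category: a category enriched in posets. -/
structure PreOrdCat : Type (max (u+1) (v+1)) where
  Obj : Type u
  Hom : Obj → Obj → Type v
  str : ∀ A B : Obj, PartialOrder (Hom A B)
  comp : ∀ {A B C : Obj}, Hom B C → Hom A B → Hom A C
  one : ∀ A : Obj, Hom A A

attribute [instance] PreOrdCat.str

structure OrdCat extends PreOrdCat.{u, v} where
  comp_assoc : ∀ {A B C D : Obj} (h : Hom C D) (g : Hom B C) (f : Hom A B),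
    comp (comp h g) f = comp h (comp g f)
  one_comp : ∀ {A B : Obj} (f : Hom A B), comp (one B) f = f
  comp_one : ∀ {A B : Obj} (f : Hom A B), comp f (one A) = f
  comp_mono : ∀ {A B C : Obj} {g g' : Hom B C} {f f' : Hom A B},
    g ≤ g' → f ≤ f' → comp g f ≤ comp g' f'

/-- A 2-functor (Ord-enriched functor) between locally ordered 2-categories. -/
structure OrdFunctor (C : OrdCat.{u₁, v₁}) (D : OrdCat.{u₂, v₂}) where
  obj : C.Obj → D.Obj
  map : ∀ {A B : C.Obj}, C.Hom A B → D.Hom (obj A) (obj B)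
  map_comp : ∀ {A B E : C.Obj} (g : C.Hom B E) (f : C.Hom A B),
    map (C.comp g f) = D.comp (map g) (map f)
  map_one : ∀ A : C.Obj, map (C.one A) = D.one (obj A)
  map_mono : ∀ {A B : C.Obj} {f g : C.Hom A B}, f ≤ g → map f ≤ map g

/-- Composition of 2-functors (`F.comp G` is "first `G`, then `F`"). -/
def OrdFunctor.comp {C : OrdCat.{u₁, v₁}} {D : OrdCat.{u₂, v₂}} {E : OrdCat.{u₃, v₃}}
    (F : OrdFunctor D E) (G : OrdFunctor C D) : OrdFunctor C E where
  obj X := F.obj (G.obj X)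
  map f := F.map (G.map f)
  map_comp g f := by
    show F.map (G.map (C.comp g f)) = _
    rw [G.map_comp, F.map_comp]
  map_one A := by
    show F.map (G.map (C.one A)) = _
    rw [G.map_one, F.map_one]
  map_mono h := F.map_mono (G.map_mono h)

/-- A local equivalence: an equivalence on each hom-poset. -/
def OrdFunctor.IsLocalEquiv {B : OrdCat.{u₁, v₁}} {C : OrdCat.{u₂, v₂}}
    (W : OrdFunctor B C) : Prop :=
  ∀ {X Y : B.Obj},
    Function.Surjective (fun f : B.Hom X Y => W.map f) ∧
    ∀ f g : B.Hom X Y, W.map f ≤ W.map g ↔ f ≤ g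

/-- A 2-adjunction `F ⊣ U` presented by unit and counit. -/
structure OrdAdj {C : OrdCat.{u₁, v₁}} {A : OrdCat.{u₂, v₂}}
    (F : OrdFunctor C A) (U : OrdFunctor A C) where
  unit : ∀ X : C.Obj, C.Hom X (U.obj (F.obj X))
  counit : ∀ Y : A.Obj, A.Hom (F.obj (U.obj Y)) Y
  unit_natural : ∀ {X X' : C.Obj} (f : C.Hom X X'),
    C.comp (U.map (F.map f)) (unit X) = C.comp (unit X') f
  counit_natural : ∀ {Y Y' : A.Obj} (g : A.Hom Y Y'),
    A.comp g (counit Y) = A.comp (counit Y') (F.map (U.map g))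
  tri1 : ∀ X : C.Obj, A.comp (counit (F.obj X)) (F.map (unit X)) = A.one (F.obj X)
  tri2 : ∀ Y : A.Obj, C.comp (U.map (counit Y)) (unit (U.obj Y)) = C.one (U.obj Y)

theorem OrdFunctor.IsLocalEquiv.map_injective {ℬ : OrdCat.{u₁, v₁}} {𝒞 : OrdCat.{u₂, v₂}}
    {W : OrdFunctor ℬ 𝒞} (hW : W.IsLocalEquiv) {X Y : ℬ.Obj} :
    Function.Injective (fun f : ℬ.Hom X Y => W.map f) := fun f g h =>
  le_antisymm ((hW.2 f g).mp h.le) ((hW.2 g f).mp h.ge)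

def OrdAdj.ofCompFaithful {𝒜 : OrdCat.{u₁, v₁}} {ℬ : OrdCat.{u₂, v₂}} {𝒞 : OrdCat.{u₃, v₃}}
    {V : OrdFunctor 𝒜 ℬ} {W : OrdFunctor ℬ 𝒞} {F : OrdFunctor 𝒞 𝒜} (adj : OrdAdj F (W.comp V))
    (hW : ∀ {X Y : ℬ.Obj}, Function.Injective (fun f : ℬ.Hom X Y => W.map f))
    (ξ : ∀ B : ℬ.Obj, ℬ.Hom B (V.obj (F.obj (W.obj B))))
    (hξ : ∀ B : ℬ.Obj, W.map (ξ B) = adj.unit (W.obj B)) :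
    OrdAdj (F.comp W) V where
  unit := ξ
  counit := adj.counit
  unit_natural {X X'} f := hW <| by
    change W.map (ℬ.comp (V.map (F.map (W.map f))) (ξ X)) = W.map (ℬ.comp (ξ X') f)
    rw [W.map_comp, W.map_comp, hξ, hξ]
    exact adj.unit_natural (W.map f)
  counit_natural := adj.counit_natural
  tri1 X := by
    change 𝒜.comp (adj.counit (F.obj (W.obj X))) (F.map (W.map (ξ X))) = _
    rw [hξ]
    exact adj.tri1 (W.obj X)
  tri2 Y := hW <| by
    change W.map (ℬ.comp (@V.map (F.obj (W.obj (V.obj Y))) Y (adj.counit Y)) (ξ (V.obj Y))) =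
      W.map (ℬ.one (V.obj Y))
    rw [W.map_comp, hξ, W.map_one]
    exact adj.tri2 Y

/-- given 2-functors `V : 𝒜 → ℬ`, `W : ℬ → 𝒞` with `W` a local
equivalence and `U = W ∘ V`, and a left 2-adjoint `F ⊣ U`, the composite
`F ∘ W` is left 2-adjoint to `V`, with unit `ξ` satisfying `W(ξ_B) = η_{WB}`. -/
theorem stmt_5 (𝒜 ℬ 𝒞 : OrdCat.{u, v})
    (V : OrdFunctor 𝒜 ℬ) (W : OrdFunctor ℬ 𝒞) (hW : W.IsLocalEquiv)
    (F : OrdFunctor 𝒞 𝒜) (adj : OrdAdj F (W.comp V)) :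
    ∃ adj' : OrdAdj (F.comp W) V,
      ∀ B : ℬ.Obj, W.map (adj'.unit B) = adj.unit (W.obj B) := by
  choose ξ hξ using fun B : ℬ.Obj => hW.1 (adj.unit (W.obj B))
  exact ⟨adj.ofCompFaithful (fun {_ _} => hW.map_injective) ξ hξ, hξ⟩
end

section
/- Let Ω be a locale and (F, ≤) an ordered sheaf on Ω with associated Idm(Ω)-enriched category A. There is a bijection between downsets S ⊆ F_u ⊆ F (subsheaves satisfying internally: y ≤ x and x ∈ S implies y ∈ S) and presheaves φ: *_u ⇸ A (maps φ: A₀ → Ω with φ(x) ≤ u ∧ tx and A(y,x) ∧ φ(x) ≤ φ(y)), given by φ(x) = ⋁{ v ≤ tx | x|_v ∈ S(v) }; under this bijection the principal downset at x corresponds to the representable presheaf A(−, x). -/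
universe u v

section SheafSetup

variable {Ω : Type u} [Order.Frame Ω] {F : Ω → Type v}

/-- "The greatest level at which `x ∈ S`": the internal truth value of
membership of `x` in the subobject `S`. -/
def memLevel (res : ∀ {v w : Ω}, w ≤ v → F v → F w)
    (S : ∀ v : Ω, Set (F v)) (x : Σ v : Ω, F v) : Ω :=
  sSup {v : Ω | ∃ h : v ≤ x.1, res h x.2 ∈ S v}

/-- `S` is a downset of `(F, ≤)` truncated at `u`: a subsheaf of `F_u` which is
internally downclosed (`y ≤ x` and `x ∈ S` imply `y ∈ S`, read via the
`Idm(Ω)`-enriched hom `A(y,x)` = "the greatest level at which `y ≤ x`"). -/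
def IsDownset (res : ∀ {v w : Ω}, w ≤ v → F v → F w)
    (hom : (Σ v : Ω, F v) → (Σ v : Ω, F v) → Ω)
    (u : Ω) (S : ∀ v : Ω, Set (F v)) : Prop :=
  (∀ (v : Ω) (x : F v), x ∈ S v → v ≤ u) ∧
  (∀ (v w : Ω) (h : w ≤ v) (x : F v), x ∈ S v → res h x ∈ S w) ∧
  (∀ (v : Ω) (x : F v) (ws : Set Ω), sSup ws = v →
    (∀ w ∈ ws, ∀ h : w ≤ v, res h x ∈ S w) → x ∈ S v) ∧
  (∀ y x : Σ v : Ω, F v, hom y x ⊓ memLevel res S x ≤ memLevel res S y)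

/-- `φ` is a presheaf `*_u ⇸ A` on the `Idm(Ω)`-category `A` associated to
`(F, ≤)`. -/
def IsPresheafOn (hom : (Σ v : Ω, F v) → (Σ v : Ω, F v) → Ω)
    (u : Ω) (φ : (Σ v : Ω, F v) → Ω) : Prop :=
  (∀ x : Σ v : Ω, F v, φ x ≤ u ⊓ x.1) ∧
  (∀ y x : Σ v : Ω, F v, hom y x ⊓ φ x ≤ φ y)

/-- The principal downset at `x`: `y ∈ S_x` iff `y ≤ x` (internally). -/
def principalDownset (hom : (Σ v : Ω, F v) → (Σ v : Ω, F v) → Ω)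
    (x : Σ v : Ω, F v) : ∀ v : Ω, Set (F v) :=
  fun v => {y : F v | v ≤ hom ⟨v, y⟩ x}

end SheafSetup

/-! A downset `S` and a presheaf `φ` determine each other through levels: `φ(x)` is the largest
`v` with `x|_v ∈ S(v)`, and `S(v)` consists of the `x` with `v ≤ φ(x)`. Since the homs between
`x` and its restriction `x|_w` are both `w`, every presheaf satisfies
`w ⊓ φ(x) ≤ φ(x|_w) ≤ φ(x)`, which makes both round trips identities; gluing of `S` is what
recovers `x ∈ S(v)` from `v ≤ φ(x)`. The principal downset at `x` is literally the downset of
the presheaf `A(−, x)`, so it corresponds to `A(−, x)`. -/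

section DownsetPresheaf

variable {Ω : Type u} [Order.Frame Ω] {F : Ω → Type v}
  {res : ∀ {v w : Ω}, w ≤ v → F v → F w} {hom : (Σ v : Ω, F v) → (Σ v : Ω, F v) → Ω} {u : Ω}

def downsetOfPresheaf (φ : (Σ v : Ω, F v) → Ω) : ∀ v : Ω, Set (F v) :=
  fun v => {x : F v | v ≤ φ ⟨v, x⟩}

theorem principalDownset_eq_downsetOfPresheaf (x : Σ v : Ω, F v) :
    principalDownset hom x = downsetOfPresheaf (fun y => hom y x) :=
  rfl

theorem mem_iff_le_memLevel (hres_id : ∀ (v : Ω) (x : F v), res (le_refl v) x = x)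
    {S : ∀ v : Ω, Set (F v)} (hS : IsDownset res hom u S) (v : Ω) (x : F v) :
    x ∈ S v ↔ v ≤ memLevel res S ⟨v, x⟩ := by
  constructor
  · intro hx
    refine le_sSup ⟨le_rfl, ?_⟩
    show res le_rfl x ∈ S v
    rwa [hres_id]
  · intro hv
    have hsup : sSup {w : Ω | ∃ h : w ≤ v, res h x ∈ S w} = v :=
      le_antisymm (sSup_le fun w hw => hw.1) hv
    exact hS.2.2.1 v x _ hsup fun w hw _ => hw.2

theorem downsetOfPresheaf_memLevel (hres_id : ∀ (v : Ω) (x : F v), res (le_refl v) x = x)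
    {S : ∀ v : Ω, Set (F v)} (hS : IsDownset res hom u S) :
    downsetOfPresheaf (memLevel res S) = S := by
  funext v
  ext x
  exact (mem_iff_le_memLevel hres_id hS v x).symm

theorem isPresheafOn_memLevel {S : ∀ v : Ω, Set (F v)} (hS : IsDownset res hom u S) :
    IsPresheafOn hom u (memLevel res S) :=
  ⟨fun _ => sSup_le fun v ⟨hv, hx⟩ => le_inf (hS.1 v _ hx) hv, hS.2.2.2⟩

theorem isPresheafOn_hom_left (hcomp : ∀ z y x : Σ v : Ω, F v, hom z y ⊓ hom y x ≤ hom z x)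
    (hhom_le : ∀ y x : Σ v : Ω, F v, hom y x ≤ x.1 ⊓ y.1) {x : Σ v : Ω, F v} (hxu : x.1 ≤ u) :
    IsPresheafOn hom u (fun y => hom y x) :=
  ⟨fun y => (hhom_le y x).trans (inf_le_inf_right _ hxu), fun z y => hcomp z y x⟩

namespace IsPresheafOn

variable {φ : (Σ v : Ω, F v) → Ω}

theorem inf_le_restrict (hφ : IsPresheafOn hom u φ)
    (hkey1 : ∀ {v w : Ω} (h : w ≤ v) (x : F v), hom ⟨w, res h x⟩ ⟨v, x⟩ = w)
    {v w : Ω} (h : w ≤ v) (x : F v) : w ⊓ φ ⟨v, x⟩ ≤ φ ⟨w, res h x⟩ := by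
  simpa only [hkey1 h x] using hφ.2 ⟨w, res h x⟩ ⟨v, x⟩

theorem restrict_le (hφ : IsPresheafOn hom u φ)
    (hkey2 : ∀ {v w : Ω} (h : w ≤ v) (x : F v), hom ⟨v, x⟩ ⟨w, res h x⟩ = w)
    {v w : Ω} (h : w ≤ v) (x : F v) : φ ⟨w, res h x⟩ ≤ φ ⟨v, x⟩ :=
  calc φ ⟨w, res h x⟩ = w ⊓ φ ⟨w, res h x⟩ :=
        (inf_eq_right.2 ((hφ.1 _).trans inf_le_right)).symm
    _ ≤ φ ⟨v, x⟩ := by simpa only [hkey2 h x] using hφ.2 ⟨v, x⟩ ⟨w, res h x⟩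

theorem memLevel_downsetOfPresheaf (hφ : IsPresheafOn hom u φ)
    (hkey1 : ∀ {v w : Ω} (h : w ≤ v) (x : F v), hom ⟨w, res h x⟩ ⟨v, x⟩ = w)
    (hkey2 : ∀ {v w : Ω} (h : w ≤ v) (x : F v), hom ⟨v, x⟩ ⟨w, res h x⟩ = w) :
    memLevel res (downsetOfPresheaf φ) = φ := by
  funext x
  apply le_antisymm
  · exact sSup_le fun v ⟨h, hv⟩ => hv.trans (hφ.restrict_le hkey2 h x.2)
  · have hx : φ x ≤ x.1 := (hφ.1 x).trans inf_le_right
    refine le_sSup ⟨hx, ?_⟩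
    show φ x ≤ φ ⟨φ x, res hx x.2⟩
    simpa only [inf_idem] using hφ.inf_le_restrict hkey1 hx x.2

theorem isDownset_downsetOfPresheaf (hφ : IsPresheafOn hom u φ)
    (hkey1 : ∀ {v w : Ω} (h : w ≤ v) (x : F v), hom ⟨w, res h x⟩ ⟨v, x⟩ = w)
    (hkey2 : ∀ {v w : Ω} (h : w ≤ v) (x : F v), hom ⟨v, x⟩ ⟨w, res h x⟩ = w) :
    IsDownset res hom u (downsetOfPresheaf φ) := by
  refine ⟨fun v x hx => hx.trans ((hφ.1 _).trans inf_le_left), ?_, ?_, ?_⟩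
  · intro v w h x (hx : v ≤ φ ⟨v, x⟩)
    calc w = w ⊓ v := (inf_eq_left.2 h).symm
      _ ≤ w ⊓ φ ⟨v, x⟩ := inf_le_inf_left w hx
      _ ≤ φ ⟨w, res h x⟩ := hφ.inf_le_restrict hkey1 h x
  · intro v x ws hsup hmem
    refine hsup.symm.trans_le (sSup_le fun w hw => ?_)
    have h : w ≤ v := hsup ▸ le_sSup hw
    exact (hmem w hw h).trans (hφ.restrict_le hkey2 h x)
  · rw [hφ.memLevel_downsetOfPresheaf hkey1 hkey2]
    exact hφ.2

end IsPresheafOn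

def downsetEquivPresheaf (hres_id : ∀ (v : Ω) (x : F v), res (le_refl v) x = x)
    (hkey1 : ∀ {v w : Ω} (h : w ≤ v) (x : F v), hom ⟨w, res h x⟩ ⟨v, x⟩ = w)
    (hkey2 : ∀ {v w : Ω} (h : w ≤ v) (x : F v), hom ⟨v, x⟩ ⟨w, res h x⟩ = w) :
    {S : ∀ v : Ω, Set (F v) // IsDownset res hom u S} ≃
      {φ : (Σ v : Ω, F v) → Ω // IsPresheafOn hom u φ} where
  toFun S := ⟨memLevel res S.1, isPresheafOn_memLevel S.2⟩
  invFun φ := ⟨downsetOfPresheaf φ.1, φ.2.isDownset_downsetOfPresheaf hkey1 hkey2⟩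
  left_inv S := Subtype.ext (downsetOfPresheaf_memLevel hres_id S.2)
  right_inv φ := Subtype.ext (φ.2.memLevel_downsetOfPresheaf hkey1 hkey2)

end DownsetPresheaf

theorem stmt_19_general (Ω : Type u) [Order.Frame Ω] (F : Ω → Type v)
    (res : ∀ {v w : Ω}, w ≤ v → F v → F w)
    (hom : (Σ v : Ω, F v) → (Σ v : Ω, F v) → Ω)
    -- sheaf axioms for the restrictions
    (hres_id : ∀ (v : Ω) (x : F v), res (le_refl v) x = x)
    -- `A` is an `Idm(Ω)`-category
    (hcomp : ∀ z y x : Σ v : Ω, F v, hom z y ⊓ hom y x ≤ hom z x)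
    (hhom_le : ∀ y x : Σ v : Ω, F v, hom y x ≤ x.1 ⊓ y.1)
    -- the key facts about restrictions
    (hkey1 : ∀ {v w : Ω} (h : w ≤ v) (x : F v), hom ⟨w, res h x⟩ ⟨v, x⟩ = w)
    (hkey2 : ∀ {v w : Ω} (h : w ≤ v) (x : F v), hom ⟨v, x⟩ ⟨w, res h x⟩ = w)
    (u : Ω) :
    ∃ e : {S : ∀ v : Ω, Set (F v) // IsDownset res hom u S} ≃
          {φ : (Σ v : Ω, F v) → Ω // IsPresheafOn hom u φ},
      -- the bijection is given by "the greatest level at which `x ∈ S`"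
      (∀ (S : {S : ∀ v : Ω, Set (F v) // IsDownset res hom u S})
          (x : Σ v : Ω, F v), (e S).1 x = memLevel res S.1 x) ∧
      -- principal downsets correspond to representable presheaves
      (∀ x : Σ v : Ω, F v, x.1 ≤ u →
        ∀ hx : IsDownset res hom u (principalDownset hom x),
          (e ⟨principalDownset hom x, hx⟩).1 = fun y => hom y x) := by
  refine ⟨downsetEquivPresheaf hres_id hkey1 hkey2, fun _ _ => rfl, fun x hxu _ => ?_⟩
  show memLevel res (principalDownset hom x) = fun y => hom y x
  rw [principalDownset_eq_downsetOfPresheaf]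
  exact (isPresheafOn_hom_left hcomp hhom_le hxu).memLevel_downsetOfPresheaf hkey1 hkey2

/-- for a locale `Ω` and an ordered sheaf `(F, ≤)` on `Ω` with
associated `Idm(Ω)`-enriched category `A`, there is a bijection between
downsets `S ⊆ F_u ⊆ F` and presheaves `φ : *_u ⇸ A`, given by
`φ(x) = ⋁{ v ≤ tx ∣ x|_v ∈ S(v) }`; under it the principal downset at `x`
corresponds to the representable presheaf `A(−, x)`. -/
theorem stmt_19 (Ω : Type u) [Order.Frame Ω] (F : Ω → Type v)
    (res : ∀ {v w : Ω}, w ≤ v → F v → F w)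
    (hom : (Σ v : Ω, F v) → (Σ v : Ω, F v) → Ω)
    -- sheaf axioms for the restrictions
    (hres_id : ∀ (v : Ω) (x : F v), res (le_refl v) x = x)
    (hres_res : ∀ {v w z : Ω} (h1 : z ≤ w) (h2 : w ≤ v) (x : F v),
      res h1 (res h2 x) = res (h1.trans h2) x)
    -- `A` is an `Idm(Ω)`-category
    (hcomp : ∀ z y x : Σ v : Ω, F v, hom z y ⊓ hom y x ≤ hom z x)
    (hhom_le : ∀ y x : Σ v : Ω, F v, hom y x ≤ x.1 ⊓ y.1)
    -- the key facts about restrictions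
    (hkey1 : ∀ {v w : Ω} (h : w ≤ v) (x : F v), hom ⟨w, res h x⟩ ⟨v, x⟩ = w)
    (hkey2 : ∀ {v w : Ω} (h : w ≤ v) (x : F v), hom ⟨v, x⟩ ⟨w, res h x⟩ = w)
    -- hom is determined locally
    (hloc : ∀ (y x : Σ v : Ω, F v) (ws : Set Ω), (∀ w ∈ ws, w ≤ y.1) →
      sSup ws = y.1 → (∀ w ∈ ws, ∀ h : w ≤ y.1, w ≤ hom ⟨w, res h y.2⟩ x) →
      y.1 ≤ hom y x)
    (u : Ω) :
    ∃ e : {S : ∀ v : Ω, Set (F v) // IsDownset res hom u S} ≃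
          {φ : (Σ v : Ω, F v) → Ω // IsPresheafOn hom u φ},
      -- the bijection is given by "the greatest level at which `x ∈ S`"
      (∀ (S : {S : ∀ v : Ω, Set (F v) // IsDownset res hom u S})
          (x : Σ v : Ω, F v), (e S).1 x = memLevel res S.1 x) ∧
      -- principal downsets correspond to representable presheaves
      (∀ x : Σ v : Ω, F v, x.1 ≤ u →
        ∀ hx : IsDownset res hom u (principalDownset hom x),
          (e ⟨principalDownset hom x, hx⟩).1 = fun y => hom y x) :=
  stmt_19_general Ω F res hom hres_id hcomp hhom_le hkey1 hkey2 u
end
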